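/- Let (V, #, ∗) be a hypervector space over a hyperfield (F, ⊕, ·) with zero vector θ, and let S = {α₁, α₂, ..., αₙ} ⊆ V. Then S is linearly dependent if and only if at least one vector αᵢ of S can be expressed as a linear combination of the remaining vectors of S, i.e., αᵢ ∈ HL(α₁, ..., α_{i−1}, α_{i+1}, ..., αₙ) for some i. -/

import Mathlib

universe u v

/-- A hyperfield: `(F, ⊕, ·)` where `(F, ⊕)` is a commutative hypergroup with zero
element `zero` (each `a` having a unique additive inverse `neg a`, and satisfying
reversibility), and `·` is an associative commutative multiplication distributing
over `⊕` from both sides, with `a·0 = 0·a = 0`, an identity `one` and multiplicative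
inverses for nonzero elements. -/
structure Hyperfield (F : Type u) where
  add : F → F → Set F
  add_nonempty : ∀ a b, (add a b).Nonempty
  add_comm : ∀ a b, add a b = add b a
  add_assoc : ∀ a b c, (⋃ t ∈ add b c, add a t) = ⋃ t ∈ add a b, add t c
  zero : F
  neg : F → F
  neg_spec : ∀ a, zero ∈ add a (neg a) ∧ zero ∈ add (neg a) a
  neg_unique : ∀ a b, zero ∈ add a b → zero ∈ add b a → b = neg a
  reversible : ∀ a b c, a ∈ add b c → b ∈ add a (neg c)
  mul : F → F → F
  mul_assoc : ∀ a b c, mul (mul a b) c = mul a (mul b c)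
  left_distrib : ∀ a b c, (mul a) '' (add b c) = add (mul a b) (mul a c)
  right_distrib : ∀ a b c, (fun t => mul t a) '' (add b c) = add (mul b a) (mul c a)
  mul_zero : ∀ a, mul a zero = zero
  zero_mul : ∀ a, mul zero a = zero
  one : F
  mul_one : ∀ a, mul a one = a
  one_ne_zero : one ≠ zero
  mul_comm : ∀ a b, mul a b = mul b a
  exists_inv : ∀ a, a ≠ zero → ∃ b, mul a b = one

/-- A hypervector space `(V, #, ∗)` over a hyperfield `K` on `F`:
`(V, #)` is a commutative hypergroup with zero vector `vzero`, and
`∗ : F × V → P*(V)` satisfies (i) `a ∗ (α # β) ⊆ a∗α # a∗β`,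
(ii) `(a ⊕ b) ∗ α ⊆ a∗α # b∗α`, (iii) `(a·b) ∗ α = a ∗ (b ∗ α)`,
(iv) `1 ∗ α = {α}` and `0 ∗ α = {θ}`. -/
structure HypervectorSpace (F : Type u) (V : Type v) (K : Hyperfield F) where
  vadd : V → V → Set V
  vadd_nonempty : ∀ x y, (vadd x y).Nonempty
  vadd_comm : ∀ x y, vadd x y = vadd y x
  vadd_assoc : ∀ x y z, (⋃ t ∈ vadd y z, vadd x t) = ⋃ t ∈ vadd x y, vadd t z
  vzero : V
  vneg : V → V
  vneg_spec : ∀ x, vzero ∈ vadd x (vneg x) ∧ vzero ∈ vadd (vneg x) x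
  vneg_unique : ∀ x y, vzero ∈ vadd x y → vzero ∈ vadd y x → y = vneg x
  vreversible : ∀ x y z, x ∈ vadd y z → y ∈ vadd x (vneg z)
  smul : F → V → Set V
  smul_nonempty : ∀ a x, (smul a x).Nonempty
  smul_vadd : ∀ a x y, (⋃ t ∈ vadd x y, smul a t) ⊆ ⋃ u ∈ smul a x, ⋃ w ∈ smul a y, vadd u w
  add_smul : ∀ a b x, (⋃ t ∈ K.add a b, smul t x) ⊆ ⋃ u ∈ smul a x, ⋃ w ∈ smul b x, vadd u w
  mul_smul : ∀ a b x, smul (K.mul a b) x = ⋃ t ∈ smul b x, smul a t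
  one_smul : ∀ x, smul K.one x = {x}
  zero_smul : ∀ x, smul K.zero x = {vzero}

namespace HypervectorSpace

variable {F : Type u} {V : Type v} {K : Hyperfield F}

/-- The hyperoperation `#` extended to subsets: `A # B = ⋃_{a ∈ A, b ∈ B} a # b`. -/
def setVadd (H : HypervectorSpace F V K) (A B : Set V) : Set V :=
  ⋃ a ∈ A, ⋃ b ∈ B, H.vadd a b

/-- A subset `W` of a hypervector space is a hypersubspace if it is closed under `#`
and `∗`, contains the zero vector, and contains additive inverses. -/
def IsHypersubspace (H : HypervectorSpace F V K) (W : Set V) : Prop :=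
  (∀ α ∈ W, ∀ β ∈ W, H.vadd α β ⊆ W) ∧
  (∀ a : F, ∀ α ∈ W, H.smul a α ⊆ W) ∧
  H.vzero ∈ W ∧
  (∀ α ∈ W, H.vneg α ∈ W)

/-- Iterated hyperoperation `A₁ # A₂ # ... # Aₙ` on a list of subsets
(by convention the empty hypersum is `{θ}`). -/
def hsum (H : HypervectorSpace F V K) : List (Set V) → Set V
  | [] => {H.vzero}
  | [A] => A
  | A :: B :: rest => H.setVadd A (HypervectorSpace.hsum H (B :: rest))

/-- The linear combination set `a₁∗α₁ # a₂∗α₂ # ... # aₙ∗αₙ`. -/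
def lincomb (H : HypervectorSpace F V K) {n : ℕ} (a : Fin n → F) (α : Fin n → V) : Set V :=
  H.hsum (List.ofFn fun i => H.smul (a i) (α i))

/-- The hyperlinear span `HL(α₁, ..., αₙ) = ⋃ { a₁∗α₁ # ... # aₙ∗αₙ : a₁, ..., aₙ ∈ F }`. -/
def HL (H : HypervectorSpace F V K) {n : ℕ} (α : Fin n → V) : Set V :=
  ⋃ a : Fin n → F, H.lincomb a α

/-- The family `α₁, ..., αₙ` is linearly dependent if `θ ∈ a₁∗α₁ # ... # aₙ∗αₙ`
for some scalars `a₁, ..., aₙ`, not all zero. -/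
def LinDep (H : HypervectorSpace F V K) {n : ℕ} (α : Fin n → V) : Prop :=
  ∃ a : Fin n → F, (∃ i, a i ≠ K.zero) ∧ H.vzero ∈ H.lincomb a α

/-- Strongly left distributive: equality `(a ⊕ b) ∗ α = a∗α # b∗α`. -/
def StronglyLeftDistrib (H : HypervectorSpace F V K) : Prop :=
  ∀ (a b : F) (x : V),
    (⋃ t ∈ K.add a b, H.smul t x) = ⋃ u ∈ H.smul a x, ⋃ w ∈ H.smul b x, H.vadd u w

/-- The set of all finite linear combinations of elements of `S`. -/
def HLSet (H : HypervectorSpace F V K) (S : Set V) : Set V :=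
  ⋃ n : ℕ, ⋃ β : Fin n → V, ⋃ (_ : ∀ i, β i ∈ S), H.HL β

/-- A set `S` is linearly independent if every finite family of distinct elements
of `S` is linearly independent. -/
def LinIndepSet (H : HypervectorSpace F V K) (S : Set V) : Prop :=
  ∀ (n : ℕ) (β : Fin n → V), Function.Injective β → (∀ i, β i ∈ S) → ¬ H.LinDep β

/-- `S` is a basis of the hypersubspace `U`: `S ⊆ U`, `S` is linearly independent,
and every element of `U` is a finite linear combination of elements of `S`. -/
def IsBasisOf (H : HypervectorSpace F V K) (S U : Set V) : Prop :=
  S ⊆ U ∧ H.LinIndepSet S ∧ U ⊆ H.HLSet S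

end HypervectorSpace

/-!
Scaling a relation `θ ∈ a₁∗α₁ # ... # aₙ∗αₙ` by `c` keeps `θ` in the combination with
coefficients `c·aⱼ`, since `c ∗ θ = {θ}` and `∗` distributes into `#`. Taking
`c = -(aᵢ)⁻¹` for a nonzero `aᵢ` turns the `i`-th term into `(-1) ∗ αᵢ = {-αᵢ}`; moving it
to the front, `θ ∈ -αᵢ # w` with `w` in the span of the other vectors forces `w = αᵢ`.
Conversely, if `αᵢ` is a combination of the other vectors, inserting the coefficient `-1`
at `i` gives a dependence relation, since `θ ∈ -αᵢ # αᵢ`.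
-/

namespace Hyperfield

variable {F : Type u} (K : Hyperfield F)

lemma neg_neg (a : F) : K.neg (K.neg a) = a :=
  (K.neg_unique (K.neg a) a (K.neg_spec a).2 (K.neg_spec a).1).symm

lemma neg_eq_mul_neg_one (a : F) : K.neg a = K.mul a (K.neg K.one) := by
  have hmem : K.zero ∈ K.add a (K.mul a (K.neg K.one)) := by
    have hdistrib := K.left_distrib a K.one (K.neg K.one)
    rw [K.mul_one] at hdistrib
    exact hdistrib ▸ ⟨K.zero, (K.neg_spec K.one).1, K.mul_zero a⟩
  exact (K.neg_unique a _ hmem (K.add_comm a _ ▸ hmem)).symm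

lemma neg_one_mul_neg_one : K.mul (K.neg K.one) (K.neg K.one) = K.one := by
  rw [← neg_eq_mul_neg_one, neg_neg]

lemma neg_one_ne_zero : K.neg K.one ≠ K.zero := by
  intro h
  have := K.neg_one_mul_neg_one
  rw [h, K.mul_zero] at this
  exact K.one_ne_zero this.symm

end Hyperfield

namespace HypervectorSpace

variable {F : Type u} {V : Type v} {K : Hyperfield F} (H : HypervectorSpace F V K)

lemma vneg_vneg (x : V) : H.vneg (H.vneg x) = x :=
  (H.vneg_unique (H.vneg x) x (H.vneg_spec x).2 (H.vneg_spec x).1).symm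

lemma eq_vneg_of_vzero_mem_vadd {x y : V} (h : H.vzero ∈ H.vadd x y) : y = H.vneg x :=
  H.vneg_unique x y h (H.vadd_comm x y ▸ h)

lemma vzero_vadd (x : V) : H.vadd H.vzero x = {x} := by
  ext y
  refine ⟨fun hy => ?_, fun hy => ?_⟩
  · have h := H.eq_vneg_of_vzero_mem_vadd (H.vadd_comm _ _ ▸ H.vreversible y H.vzero x hy)
    rwa [vneg_vneg] at h
  · rw [Set.mem_singleton_iff.1 hy]
    have h := H.vreversible _ _ _ (H.vneg_spec x).1
    rwa [vneg_vneg] at h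

lemma smul_vzero (c : F) : H.smul c H.vzero = {H.vzero} := by
  simpa [H.zero_smul, K.mul_zero] using (H.mul_smul c K.zero H.vzero).symm

lemma vneg_mem_smul_neg_one (x : V) : H.vneg x ∈ H.smul (K.neg K.one) x := by
  have hθ : H.vzero ∈ ⋃ t ∈ K.add K.one (K.neg K.one), H.smul t x :=
    Set.mem_biUnion (K.neg_spec K.one).1 (by rw [H.zero_smul]; rfl)
  obtain ⟨u, hu, w, hw, hθuw⟩ := by
    simpa only [Set.mem_iUnion, exists_prop] using H.add_smul _ _ _ hθ
  rw [H.one_smul, Set.mem_singleton_iff] at hu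
  subst hu
  rwa [← H.eq_vneg_of_vzero_mem_vadd hθuw]

lemma smul_neg_one (x : V) : H.smul (K.neg K.one) x = {H.vneg x} := by
  refine Set.eq_singleton_iff_unique_mem.2 ⟨H.vneg_mem_smul_neg_one x, fun u hu => ?_⟩
  -- `-u ∈ (-1) ∗ u ⊆ ((-1)·(-1)) ∗ x = {x}`
  have hx : H.smul (K.neg K.one) u ⊆ {x} := by
    have hmul := H.mul_smul (K.neg K.one) (K.neg K.one) x
    rw [K.neg_one_mul_neg_one, H.one_smul] at hmul
    rw [hmul]
    exact Set.subset_biUnion_of_mem (u := fun t => H.smul (K.neg K.one) t) hu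
  rw [← hx (H.vneg_mem_smul_neg_one u), vneg_vneg]

lemma mem_setVadd {A B : Set V} {x : V} :
    x ∈ H.setVadd A B ↔ ∃ a ∈ A, ∃ b ∈ B, x ∈ H.vadd a b := by
  simp [setVadd]

lemma setVadd_comm (A B : Set V) : H.setVadd A B = H.setVadd B A := by
  ext x
  simp only [mem_setVadd]
  exact ⟨fun ⟨a, ha, b, hb, hx⟩ => ⟨b, hb, a, ha, H.vadd_comm a b ▸ hx⟩,
    fun ⟨a, ha, b, hb, hx⟩ => ⟨b, hb, a, ha, H.vadd_comm a b ▸ hx⟩⟩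

lemma setVadd_assoc (A B C : Set V) :
    H.setVadd (H.setVadd A B) C = H.setVadd A (H.setVadd B C) := by
  ext x
  have hassoc := fun a b c => Set.ext_iff.1 (H.vadd_assoc a b c) x
  simp only [Set.mem_iUnion, exists_prop] at hassoc
  simp only [mem_setVadd]
  constructor
  · rintro ⟨t, ⟨a, ha, b, hb, ht⟩, c, hc, hx⟩
    obtain ⟨s, hs, hx⟩ := (hassoc a b c).2 ⟨t, ht, hx⟩
    exact ⟨a, ha, s, ⟨b, hb, c, hc, hs⟩, hx⟩
  · rintro ⟨a, ha, s, ⟨b, hb, c, hc, hs⟩, hx⟩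
    obtain ⟨t, ht, hx⟩ := (hassoc a b c).1 ⟨s, hs, hx⟩
    exact ⟨t, ⟨a, ha, b, hb, ht⟩, c, hc, hx⟩

lemma setVadd_left_comm (A B C : Set V) :
    H.setVadd A (H.setVadd B C) = H.setVadd B (H.setVadd A C) := by
  rw [← setVadd_assoc, H.setVadd_comm A B, setVadd_assoc]

lemma setVadd_singleton_vzero (A : Set V) : H.setVadd A {H.vzero} = A := by
  ext x
  simp [mem_setVadd, H.vadd_comm _ H.vzero, vzero_vadd]

lemma hsum_cons (A : Set V) (L : List (Set V)) :
    H.hsum (A :: L) = H.setVadd A (H.hsum L) := by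
  cases L with
  | nil => exact (H.setVadd_singleton_vzero A).symm
  | cons B L => rfl

lemma hsum_ofFn_eq_setVadd_succAbove {n : ℕ} (g : Fin (n + 1) → Set V) (i : Fin (n + 1)) :
    H.hsum (List.ofFn g) = H.setVadd (g i) (H.hsum (List.ofFn (g ∘ i.succAbove))) := by
  induction n with
  | zero => rw [Fin.fin_one_eq_zero i, List.ofFn_succ, hsum_cons]; rfl
  | succ n ih =>
    cases i using Fin.cases with
    | zero => rw [List.ofFn_succ, hsum_cons]; rfl
    | succ j =>
      have hofFn : List.ofFn (g ∘ j.succ.succAbove) =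
          g 0 :: List.ofFn ((fun k => g k.succ) ∘ j.succAbove) := by
        rw [List.ofFn_succ]
        exact congrArg₂ _ (congrArg g (Fin.succ_succAbove_zero j))
          (congrArg List.ofFn (funext fun k => congrArg g (Fin.succ_succAbove_succ j k)))
      rw [List.ofFn_succ, hsum_cons, ih (fun k => g k.succ) j, setVadd_left_comm, hofFn,
        hsum_cons]

lemma lincomb_eq_setVadd_succAbove {n : ℕ} (a : Fin (n + 1) → F) (α : Fin (n + 1) → V)
    (i : Fin (n + 1)) :
    H.lincomb a α =
      H.setVadd (H.smul (a i) (α i)) (H.lincomb (a ∘ i.succAbove) (α ∘ i.succAbove)) :=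
  H.hsum_ofFn_eq_setVadd_succAbove _ i

lemma smul_subset_lincomb_mul (c : F) {n : ℕ} {a : Fin n → F} {α : Fin n → V} {y : V}
    (hy : y ∈ H.lincomb a α) : H.smul c y ⊆ H.lincomb (fun i => K.mul c (a i)) α := by
  induction n generalizing y with
  | zero =>
    rw [hy, smul_vzero]
    rfl
  | succ n ih =>
    rw [H.lincomb_eq_setVadd_succAbove _ _ 0] at hy ⊢
    obtain ⟨u, hu, w, hw, hy⟩ := H.mem_setVadd.1 hy
    intro z hz
    obtain ⟨u', hu', w', hw', hz⟩ := by
      simpa only [Set.mem_iUnion, exists_prop] using H.smul_vadd c u w (Set.mem_biUnion hy hz)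
    refine H.mem_setVadd.2 ⟨u', ?_, w', ih hw hw', hz⟩
    rw [H.mul_smul]
    exact Set.mem_biUnion hu hu'

end HypervectorSpace

/-- A finite family `α₁, ..., αₙ` is linearly dependent iff at least one of its
members lies in the hyperlinear span of the remaining ones. -/
theorem HypervectorSpace.linDep_iff_mem_HL_remaining {F : Type u} {V : Type v}
    {K : Hyperfield F} (H : HypervectorSpace F V K) {n : ℕ}
    (α : Fin (n + 1) → V) :
    H.LinDep α ↔ ∃ i : Fin (n + 1), α i ∈ H.HL (α ∘ i.succAbove) := by
  constructor
  · rintro ⟨a, ⟨i, hai⟩, hθ⟩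
    obtain ⟨b, hb⟩ := K.exists_inv (a i) hai
    have hci : K.mul (K.mul (K.neg K.one) b) (a i) = K.neg K.one := by
      rw [K.mul_assoc, K.mul_comm b, hb, K.mul_one]
    have hθ' := H.smul_subset_lincomb_mul (K.mul (K.neg K.one) b) hθ
      (by rw [smul_vzero]; rfl)
    rw [H.lincomb_eq_setVadd_succAbove _ _ i, hci, smul_neg_one] at hθ'
    obtain ⟨_, rfl, w, hw, hθw⟩ := H.mem_setVadd.1 hθ'
    rw [H.eq_vneg_of_vzero_mem_vadd hθw, vneg_vneg] at hw
    exact ⟨i, Set.mem_iUnion.2 ⟨_, hw⟩⟩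
  · rintro ⟨i, hα⟩
    obtain ⟨c, hc⟩ := Set.mem_iUnion.1 hα
    refine ⟨i.insertNth (K.neg K.one) c, ⟨i, by simpa using K.neg_one_ne_zero⟩, ?_⟩
    rw [H.lincomb_eq_setVadd_succAbove _ _ i, Fin.insertNth_apply_same,
      Fin.insertNth_comp_succAbove, smul_neg_one]
    exact H.mem_setVadd.2 ⟨_, rfl, α i, hc, (H.vneg_spec (α i)).2⟩
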